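/- arXiv:1503.03272 — 6 statements merged into one kernel-verified Lean document; each statement's English description precedes it below -/
import Mathlib

section
/- Let s ≥ 2 be an integer, G a graph with clique number ω(G) ≤ s, and X a clique of G. If H is an induced subgraph of G that is (s; X)-feasible, then for every vertex x of H, the graph H − x is (s − 1; X)-feasible in G. -/
/-- Degree of `u` within the induced subgraph on the vertex set `A`. -/
def degIn {V : Type*} [Fintype V] [DecidableEq V] (G : SimpleGraph V)
    [DecidableRel G.Adj] (A : Finset V) (u : V) : ℕ :=
  (G.neighborFinset u ∩ A).card

/-- The induced subgraph on `A` is non-complete. -/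
def NonCompleteOn {V : Type*} (G : SimpleGraph V) (A : Finset V) : Prop :=
  ∃ u ∈ A, ∃ v ∈ A, u ≠ v ∧ ¬G.Adj u v

/-- The induced subgraph on `H` is `(s; X)`-feasible in `G`. -/
def Feasible {V : Type*} [Fintype V] [DecidableEq V] (G : SimpleGraph V)
    [DecidableRel G.Adj] (s : ℕ) (X H : Finset V) : Prop :=
  (∀ u ∈ H, u ∉ X → s < degIn G H u) ∧
  (∀ u ∈ H, u ∉ X → ∀ v ∈ H, v ∈ X → ¬G.Adj u v → 2 * s < degIn G H u + degIn G H v) ∧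
  NonCompleteOn G H

/-- The induced subgraph on `A` is `(s; X)`-degenerate in `G`. -/
def Degenerate {V : Type*} [Fintype V] [DecidableEq V] (G : SimpleGraph V)
    [DecidableRel G.Adj] (s : ℕ) (X A : Finset V) : Prop :=
  NonCompleteOn G A ∧ ∀ H ⊆ A, ¬Feasible G s X H

lemma degIn_erase_ge {V : Type*} [Fintype V] [DecidableEq V] (G : SimpleGraph V)
    [DecidableRel G.Adj] (A : Finset V) (x u : V) :
    degIn G A u - 1 ≤ degIn G (A.erase x) u := by
  unfold degIn
  have h : (G.neighborFinset u ∩ A).erase x ⊆ G.neighborFinset u ∩ A.erase x := by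
    intro a ha
    simp only [Finset.mem_erase, Finset.mem_inter] at ha ⊢
    tauto
  have h2 := Finset.pred_card_le_card_erase (s := G.neighborFinset u ∩ A) (a := x)
  have h3 := Finset.card_le_card h
  omega

lemma degIn_le_of_nonadj {V : Type*} [Fintype V] [DecidableEq V] (G : SimpleGraph V)
    [DecidableRel G.Adj] (A : Finset V) {u y : V} (hu : u ∈ A) (hy : y ∈ A)
    (hne : u ≠ y) (hadj : ¬G.Adj u y) : degIn G A u ≤ A.card - 2 := by
  unfold degIn
  have h : G.neighborFinset u ∩ A ⊆ (A.erase u).erase y := by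
    intro a ha
    simp only [Finset.mem_inter, SimpleGraph.mem_neighborFinset] at ha
    simp only [Finset.mem_erase]
    refine ⟨fun h => hadj (h ▸ ha.1), fun h => (G.irrefl (h ▸ ha.1)), ha.2⟩
  have := Finset.card_le_card h
  rw [Finset.card_erase_of_mem (Finset.mem_erase.2 ⟨fun h => hne h.symm, hy⟩),
    Finset.card_erase_of_mem hu] at this
  omega

theorem stmt_7 {V : Type*} [Fintype V] [DecidableEq V]
    (G : SimpleGraph V) [DecidableRel G.Adj] (s : ℕ) (hs : 2 ≤ s)
    (hω : G.CliqueFree (s + 1)) (X : Finset V) (hX : G.IsClique (X : Set V))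
    (H : Finset V) (hfeas : Feasible G s X H) (x : V) (hx : x ∈ H) :
    Feasible G (s - 1) X (H.erase x) := by
  obtain ⟨hF1, hF2, hF3⟩ := hfeas
  refine ⟨?_, ?_, ?_⟩
  · intro u hu huX
    have h1 := hF1 u (Finset.mem_of_mem_erase hu) huX
    have h2 := degIn_erase_ge G H x u
    omega
  · intro u hu huX v hv hvX hadj
    have h1 := hF2 u (Finset.mem_of_mem_erase hu) huX v (Finset.mem_of_mem_erase hv) hvX hadj
    have h2 := degIn_erase_ge G H x u
    have h3 := degIn_erase_ge G H x v
    omega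
  · by_contra hnc
    -- so H.erase x is a clique
    have hclique : G.IsClique ((H.erase x : Finset V) : Set V) := by
      intro a ha b hb hab
      by_contra hadj
      exact hnc ⟨a, ha, b, hb, hab, hadj⟩
    -- from H non-complete, get a non-neighbor y of x in H
    obtain ⟨u, hu, v, hv, huv, hnadj⟩ := hF3
    obtain ⟨y, hy, hyx, hxy⟩ : ∃ y ∈ H, y ≠ x ∧ ¬G.Adj x y := by
      by_cases hux : u = x
      · exact ⟨v, hv, fun h => huv (h ▸ hux ▸ rfl), hux ▸ hnadj⟩
      by_cases hvx : v = x
      · exact ⟨u, hu, hux, fun h => hnadj (hvx ▸ h.symm)⟩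
      · exact absurd (hclique (Finset.mem_erase.2 ⟨hux, hu⟩)
          (Finset.mem_erase.2 ⟨hvx, hv⟩) huv) hnadj
    -- show H.card ≥ s + 3
    have hcard : s + 3 ≤ H.card := by
      have hdy : degIn G H y ≤ H.card - 2 :=
        degIn_le_of_nonadj G H hy hx hyx (fun h => hxy h.symm)
      by_cases hyX : y ∈ X
      · have hxX : x ∉ X := fun hxX => hxy (hX hxX hyX (fun h => hyx h.symm))
        have hdx : degIn G H x ≤ H.card - 2 :=
          degIn_le_of_nonadj G H hx hy (fun h => hyx h.symm) hxy
        have := hF2 x hx hxX y hy hyX hxy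
        omega
      · have := hF1 y hy hyX
        omega
    -- extract an (s+1)-clique
    obtain ⟨K, hK, hKcard⟩ := Finset.exists_subset_card_eq
      (show s + 1 ≤ (H.erase x).card by
        rw [Finset.card_erase_of_mem hx]; omega)
    exact hω K ⟨hclique.subset (by exact_mod_cast hK), hKcard⟩
end

section
/- Let s ≥ 2 be an integer, G a graph with ω(G) ≤ s, and X a clique of G. If G' is an (s − 1; X)-degenerate induced subgraph of G, then for every vertex x of G − G', the subgraph induced by V(G') ∪ {x} is (s; X)-degenerate in G. -/
/-! Suppose `H ⊆ A ∪ {x}` were `(s; X)`-feasible and let `H' = H - x`. Deleting `x` lowers every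
degree by at most one, so if `H'` is non-complete it is an `(s - 1; X)`-feasible subgraph of `A`,
which degeneracy of `A` forbids. Otherwise `H'` is a clique, hence has at most `s` vertices, and
`x` has a non-neighbour `y` in `H'`. One of `x`, `y` lies outside the clique `X`; all its
neighbours in `H` lie in `H'`, so its degree in `H` is at most `s`, contradicting feasibility. -/

lemma SimpleGraph.IsClique.card_le_of_cliqueFree {V : Type*} {G : SimpleGraph V} {s : ℕ}
    (hω : G.CliqueFree (s + 1)) {T : Finset V} (hT : G.IsClique (T : Set V)) : T.card ≤ s := by
  by_contra! h
  obtain ⟨T', hT', hcard⟩ := Finset.exists_subset_card_eq h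
  exact hω T' ⟨hT.subset (by exact_mod_cast hT'), hcard⟩

section

variable {V : Type*} {G : SimpleGraph V}

lemma nonCompleteOn_iff_not_isClique {A : Finset V} :
    NonCompleteOn G A ↔ ¬G.IsClique (A : Set V) := by
  simp [NonCompleteOn, SimpleGraph.IsClique, Set.Pairwise]

lemma NonCompleteOn.mono {A B : Finset V} (h : NonCompleteOn G A) (hAB : A ⊆ B) :
    NonCompleteOn G B := by
  obtain ⟨u, hu, v, hv, huv, hnadj⟩ := h
  exact ⟨u, hAB hu, v, hAB hv, huv, hnadj⟩

variable [DecidableEq V]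

lemma NonCompleteOn.exists_not_adj_of_isClique_erase {H : Finset V} {x : V}
    (hH : NonCompleteOn G H) (hclique : G.IsClique (H.erase x : Set V)) :
    x ∈ H ∧ ∃ y ∈ H, y ≠ x ∧ ¬G.Adj x y := by
  obtain ⟨u, hu, v, hv, huv, hnadj⟩ := hH
  by_cases hux : u = x
  · subst hux
    exact ⟨hu, v, hv, huv.symm, hnadj⟩
  by_cases hvx : v = x
  · subst hvx
    exact ⟨hv, u, hu, hux, fun h => hnadj h.symm⟩
  exact absurd (hclique (by simp [hux, hu]) (by simp [hvx, hv]) huv) hnadj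

variable [Fintype V] [DecidableRel G.Adj]

variable (G) in
lemma degIn_le_degIn_erase_add_one (H : Finset V) (x u : V) :
    degIn G H u ≤ degIn G (H.erase x) u + 1 := by
  have := Finset.pred_card_le_card_erase (s := G.neighborFinset u ∩ H) (a := x)
  rw [degIn, degIn, Finset.inter_erase]
  omega

lemma degIn_le_card_erase_of_not_adj {H : Finset V} {x z : V} (hzx : ¬G.Adj z x) :
    degIn G H z ≤ (H.erase x).card := by
  refine Finset.card_le_card fun c hc => ?_
  obtain ⟨hcN, hcH⟩ := Finset.mem_inter.mp hc
  refine Finset.mem_erase.mpr ⟨?_, hcH⟩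
  rintro rfl
  exact hzx ((G.mem_neighborFinset z c).mp hcN)

lemma Feasible.erase {s : ℕ} (hs : 1 ≤ s) {X H : Finset V} (hF : Feasible G s X H) {x : V}
    (hH' : NonCompleteOn G (H.erase x)) : Feasible G (s - 1) X (H.erase x) := by
  obtain ⟨hdeg, hdegSum, -⟩ := hF
  refine ⟨fun u hu huX => ?_, fun u hu huX v hv hvX hnadj => ?_, hH'⟩
  · have := hdeg u (Finset.mem_of_mem_erase hu) huX
    have := degIn_le_degIn_erase_add_one G H x u
    omega
  · have := hdegSum u (Finset.mem_of_mem_erase hu) huX v (Finset.mem_of_mem_erase hv) hvX hnadj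
    have := degIn_le_degIn_erase_add_one G H x u
    have := degIn_le_degIn_erase_add_one G H x v
    omega

lemma Feasible.lt_card_erase_of_isClique {s : ℕ} {X H : Finset V} (hF : Feasible G s X H)
    (hX : G.IsClique (X : Set V)) {x : V} (hclique : G.IsClique (H.erase x : Set V)) :
    s < (H.erase x).card := by
  obtain ⟨hdeg, -, hH⟩ := hF
  obtain ⟨hxH, y, hyH, hyx, hxy⟩ := hH.exists_not_adj_of_isClique_erase hclique
  obtain ⟨z, hzH, hzX, hzx⟩ : ∃ z ∈ H, z ∉ X ∧ ¬G.Adj z x := by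
    by_cases hxX : x ∈ X
    · exact ⟨y, hyH, fun hyX => hxy (hX hxX hyX hyx.symm), fun h => hxy h.symm⟩
    · exact ⟨x, hxH, hxX, G.loopless.irrefl x⟩
  have := hdeg z hzH hzX
  have : degIn G H z ≤ _ := degIn_le_card_erase_of_not_adj hzx
  omega

end

theorem stmt_8_general {V : Type*} [Fintype V] [DecidableEq V]
    (G : SimpleGraph V) [DecidableRel G.Adj] (s : ℕ) (hs : 2 ≤ s)
    (hω : G.CliqueFree (s + 1)) (X : Finset V) (hX : G.IsClique (X : Set V))
    (A : Finset V) (hdeg : Degenerate G (s - 1) X A) (x : V) :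
    Degenerate G s X (insert x A) := by
  obtain ⟨hA, hnotFeasible⟩ := hdeg
  refine ⟨hA.mono (Finset.subset_insert x A), fun H hH hF => ?_⟩
  by_cases hclique : G.IsClique (H.erase x : Set V)
  · exact absurd (hF.lt_card_erase_of_isClique hX hclique)
      (hclique.card_le_of_cliqueFree hω).not_gt
  · exact hnotFeasible _ (Finset.subset_insert_iff.mp hH)
      (hF.erase (by omega) (nonCompleteOn_iff_not_isClique.mpr hclique))

theorem stmt_8 {V : Type*} [Fintype V] [DecidableEq V]
    (G : SimpleGraph V) [DecidableRel G.Adj] (s : ℕ) (hs : 2 ≤ s)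
    (hω : G.CliqueFree (s + 1)) (X : Finset V) (hX : G.IsClique (X : Set V))
    (A : Finset V) (hdeg : Degenerate G (s - 1) X A) (x : V) (hx : x ∉ A) :
    Degenerate G s X (insert x A) :=
  stmt_8_general G s hs hω X hX A hdeg x
end

section
/- Let s₁, s₂ ≥ 2 be integers, and G be a non-complete graph with σ₂(G) ≥ 2(s₁ + s₂ + 1) − 1. Let X = {v ∈ V(G) : d_G(v) ≤ s₁ + s₂} and let U ⊊ V(G) with |U| = s_{3−i} + α for some i ∈ {1,2} and integer α ≤ 1. Then: (i) d_{G−U}(u) > sᵢ − α for every u ∈ V(G−U) \ X; (ii) d_{G−U}(u) + d_{G−U}(v) > 2(sᵢ − α) for all non-adjacent u ∈ V(G−U) \ X and v ∈ V(G−U) ∩ X; (iii) |V(G−U)| ≥ (sᵢ − α) + 3. -/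
theorem stmt_10 {V : Type*} [Fintype V] [DecidableEq V]
    (G : SimpleGraph V) [DecidableRel G.Adj] (s₁ s₂ si sj : ℕ)
    (hs₁ : 2 ≤ s₁) (hs₂ : 2 ≤ s₂)
    (hij : (si = s₁ ∧ sj = s₂) ∨ (si = s₂ ∧ sj = s₁))
    (hnc : ∃ u v : V, u ≠ v ∧ ¬G.Adj u v)
    (hσ : ∀ u v : V, u ≠ v → ¬G.Adj u v →
      2 * (s₁ + s₂ + 1) - 1 ≤ G.degree u + G.degree v)
    (U : Finset V) (hU : U ⊂ Finset.univ) (α : ℤ) (hα : α ≤ 1)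
    (hUcard : (U.card : ℤ) = sj + α) :
    (∀ u ∈ Finset.univ \ U, ¬G.degree u ≤ s₁ + s₂ →
      (si : ℤ) - α < (degIn G (Finset.univ \ U) u : ℤ)) ∧
    (∀ u ∈ Finset.univ \ U, ¬G.degree u ≤ s₁ + s₂ →
      ∀ v ∈ Finset.univ \ U, G.degree v ≤ s₁ + s₂ → ¬G.Adj u v →
      2 * ((si : ℤ) - α) <
        (degIn G (Finset.univ \ U) u : ℤ) + (degIn G (Finset.univ \ U) v : ℤ)) ∧
    ((si : ℤ) - α + 3 ≤ ((Finset.univ \ U : Finset V).card : ℤ)) := by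
  classical
  have hsum : si + sj = s₁ + s₂ := by rcases hij with ⟨h1, h2⟩ | ⟨h1, h2⟩ <;> omega
  have hkey : ∀ w : V, G.degree w ≤ degIn G (Finset.univ \ U) w + U.card := by
    intro w
    have hsub : G.neighborFinset w ⊆ (G.neighborFinset w ∩ (Finset.univ \ U)) ∪ U := by
      intro x hx
      by_cases hxU : x ∈ U
      · exact Finset.mem_union_right _ hxU
      · exact Finset.mem_union_left _
          (Finset.mem_inter.2 ⟨hx, Finset.mem_sdiff.2 ⟨Finset.mem_univ x, hxU⟩⟩)
    calc G.degree w = (G.neighborFinset w).card := (G.card_neighborFinset_eq_degree w).symm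
      _ ≤ ((G.neighborFinset w ∩ (Finset.univ \ U)) ∪ U).card := Finset.card_le_card hsub
      _ ≤ degIn G (Finset.univ \ U) w + U.card := Finset.card_union_le _ _
  obtain ⟨a, b, hab, hnadj⟩ := hnc
  have h2card : 2 ≤ Fintype.card V := by
    have h : ({a, b} : Finset V).card ≤ Fintype.card V := by
      rw [← Finset.card_univ]; exact Finset.card_le_univ _
    rwa [Finset.card_pair hab] at h
  have hdegbd : ∀ x y : V, x ≠ y → ¬G.Adj x y → G.degree x + 2 ≤ Fintype.card V := by
    intro x y hxy hxyadj
    have hsub : G.neighborFinset x ⊆ (Finset.univ.erase x).erase y := by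
      intro z hz
      rw [SimpleGraph.mem_neighborFinset] at hz
      refine Finset.mem_erase.2 ⟨?_, Finset.mem_erase.2 ⟨?_, Finset.mem_univ z⟩⟩
      · rintro rfl; exact hxyadj hz
      · rintro rfl; exact G.irrefl hz
    have hcard : ((Finset.univ.erase x).erase y).card = Fintype.card V - 2 := by
      rw [Finset.card_erase_of_mem (Finset.mem_erase.2 ⟨hxy.symm, Finset.mem_univ y⟩),
          Finset.card_erase_of_mem (Finset.mem_univ x), Finset.card_univ]
      omega
    have h := Finset.card_le_card hsub
    rw [hcard] at h
    rw [← G.card_neighborFinset_eq_degree x] at *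
    omega
  have hVbig : s₁ + s₂ + 3 ≤ Fintype.card V := by
    have h1 := hdegbd a b hab hnadj
    have h2 := hdegbd b a hab.symm (fun h => hnadj h.symm)
    have h3 := hσ a b hab hnadj
    omega
  refine ⟨?_, ?_, ?_⟩
  · intro u hu hX
    have hd := Nat.lt_of_not_le hX
    have hk := hkey u
    omega
  · intro u hu hXu v hv hXv hadj
    have hne : u ≠ v := by rintro rfl; exact hXu hXv
    have h3 := hσ u v hne hadj
    have hk1 := hkey u
    have hk2 := hkey v
    omega
  · have hcard : (Finset.univ \ U).card = Fintype.card V - U.card := by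
      rw [Finset.card_sdiff_of_subset (Finset.subset_univ U), Finset.card_univ]
    have hle : U.card ≤ Fintype.card V := Finset.card_le_univ U
    omega
end

section
/- Let s₁, s₂ ≥ 2, and G be a triangle-free graph of order at least 3 with σ₂(G) ≥ 2(s₁ + s₂) − 1. Let X = {v : d_G(v) ≤ s₁ + s₂ − 1} and let α ∈ {0, 1}. If U ⊆ V(G) with |U| ≤ 3 and every vertex x ∈ V(G) \ U has at most 1 + α neighbors in U, then G − U is non-complete and contains an (s₁ − α; X)-feasible induced subgraph and an (s₂ − α; X)-feasible induced subgraph of G. -/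
/-! `G - U` itself is feasible: each of its vertices loses at most `1 + α` neighbours to `U`,
and the slack `s₁, s₂ ≥ 2` absorbs this loss in both degree conditions. It is non-complete because
it has at least three vertices and `G` is triangle-free. For that, take a vertex `u` of degree
at least `4` (one end of a non-adjacent pair); two of its neighbours are non-adjacent and share
no neighbour with `u`, so `σ₂(G) ≤ 2 (|G| - d(u))`, whence `|G| ≥ σ₂(G) ≥ 2(s₁ + s₂) - 1 ≥ 7`. -/

namespace SimpleGraph

lemma CliqueFree.nonCompleteOn_of_three_le_card {V : Type*} [DecidableEq V] {G : SimpleGraph V}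
    (htf : G.CliqueFree 3) {A : Finset V} (hA : 3 ≤ A.card) : NonCompleteOn G A := by
  obtain ⟨t, htA, ht⟩ := Finset.exists_subset_card_eq hA
  obtain ⟨a, b, c, hab, hac, hbc, rfl⟩ := Finset.card_eq_three.mp ht
  by_contra hcomplete
  simp only [NonCompleteOn, not_exists, not_and, not_not] at hcomplete
  have hmem : ∀ x ∈ ({a, b, c} : Finset V), x ∈ A := fun x hx => htA hx
  simp only [Finset.mem_insert, Finset.mem_singleton, forall_eq_or_imp, forall_eq] at hmem
  exact htf {a, b, c} (is3Clique_triple_iff.mpr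
    ⟨hcomplete a hmem.1 b hmem.2.1 hab, hcomplete a hmem.1 c hmem.2.2 hac,
      hcomplete b hmem.2.1 c hmem.2.2 hbc⟩)

variable {V : Type*} [Fintype V] [DecidableEq V] {G : SimpleGraph V} [DecidableRel G.Adj]

lemma CliqueFree.degree_add_degree_le_card (htf : G.CliqueFree 3) {a b : V} (hab : G.Adj a b) :
    G.degree a + G.degree b ≤ Fintype.card V := by
  have hdisj : Disjoint (G.neighborFinset a) (G.neighborFinset b) := by
    refine Finset.disjoint_left.mpr fun z hza hzb => ?_
    rw [mem_neighborFinset] at hza hzb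
    exact htf {a, b, z} (is3Clique_triple_iff.mpr ⟨hab, hza, hzb⟩)
  rw [← card_neighborFinset_eq_degree, ← card_neighborFinset_eq_degree,
    ← Finset.card_union_of_disjoint hdisj]
  exact Finset.card_le_univ _

lemma CliqueFree.add_two_mul_degree_le_two_mul_card (htf : G.CliqueFree 3) {m : ℕ}
    (hσ : ∀ u v : V, u ≠ v → ¬G.Adj u v → m ≤ G.degree u + G.degree v) {u : V}
    (hu : 2 ≤ G.degree u) : m + 2 * G.degree u ≤ 2 * Fintype.card V := by
  rw [← card_neighborFinset_eq_degree] at hu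
  obtain ⟨b, hb, c, hc, hbc⟩ := Finset.one_lt_card.mp hu
  rw [mem_neighborFinset] at hb hc
  have hnadj : ¬G.Adj b c := isIndepSet_neighborSet_of_triangleFree G htf u hb hc hbc
  have := hσ b c hbc hnadj
  have := htf.degree_add_degree_le_card hb
  have := htf.degree_add_degree_le_card hc
  omega

lemma CliqueFree.le_card_of_le_degree_add_degree (htf : G.CliqueFree 3) {m : ℕ} (hm : 3 ≤ m)
    (hσ : ∀ u v : V, u ≠ v → ¬G.Adj u v → m ≤ G.degree u + G.degree v)
    (hnc : NonCompleteOn G Finset.univ) : m ≤ Fintype.card V := by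
  obtain ⟨x, -, y, -, hxy, hnadj⟩ := hnc
  have hxy_sum := hσ x y hxy hnadj
  obtain ⟨u, hu⟩ : ∃ u, m ≤ 2 * G.degree u := by
    rcases le_total (G.degree x) (G.degree y) with h | h
    exacts [⟨y, by omega⟩, ⟨x, by omega⟩]
  have := htf.add_two_mul_degree_le_two_mul_card hσ (u := u) (by omega)
  omega

end SimpleGraph

open SimpleGraph

section Feasible

variable {V : Type*} [Fintype V] [DecidableEq V] {G : SimpleGraph V} [DecidableRel G.Adj]

lemma degIn_add_degIn_univ_sdiff (U : Finset V) (u : V) :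
    degIn G U u + degIn G (Finset.univ \ U) u = G.degree u := by
  have hsdiff : G.neighborFinset u ∩ (Finset.univ \ U) = G.neighborFinset u \ U := by
    ext x
    simp
  rw [degIn, degIn, hsdiff, Finset.card_inter_add_card_sdiff, card_neighborFinset_eq_degree]

lemma feasible_univ_sdiff {U X : Finset V} {s β k m : ℕ}
    (hnc : NonCompleteOn G (Finset.univ \ U))
    (hUdeg : ∀ x ∈ Finset.univ \ U, degIn G U x ≤ β)
    (hX : ∀ u, u ∉ X → k ≤ G.degree u)
    (hσ : ∀ u v : V, u ≠ v → ¬G.Adj u v → m ≤ G.degree u + G.degree v)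
    (hk : s + β < k) (hm : 2 * s + 2 * β < m) :
    Feasible G s X (Finset.univ \ U) := by
  refine ⟨fun u hu huX => ?_, fun u hu huX v hv hvX hnadj => ?_, hnc⟩
  · have := degIn_add_degIn_univ_sdiff (G := G) U u
    have := hUdeg u hu
    have := hX u huX
    omega
  · have := hσ u v (by rintro rfl; exact huX hvX) hnadj
    have := degIn_add_degIn_univ_sdiff (G := G) U u
    have := degIn_add_degIn_univ_sdiff (G := G) U v
    have := hUdeg u hu
    have := hUdeg v hv
    omega

end Feasible

theorem stmt_11 {V : Type*} [Fintype V] [DecidableEq V]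
    (G : SimpleGraph V) [DecidableRel G.Adj] (s₁ s₂ : ℕ) (hs₁ : 2 ≤ s₁) (hs₂ : 2 ≤ s₂)
    (htf : G.CliqueFree 3) (hcard : 3 ≤ Fintype.card V)
    (hσ : ∀ u v : V, u ≠ v → ¬G.Adj u v →
      2 * (s₁ + s₂) - 1 ≤ G.degree u + G.degree v)
    (X : Finset V) (hX : X = Finset.univ.filter (fun v => G.degree v ≤ s₁ + s₂ - 1))
    (α : ℕ) (hα : α ≤ 1) (U : Finset V) (hU : U.card ≤ 3)
    (hUdeg : ∀ x ∈ Finset.univ \ U, degIn G U x ≤ 1 + α) :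
    NonCompleteOn G (Finset.univ \ U) ∧
    (∃ H ⊆ Finset.univ \ U, Feasible G (s₁ - α) X H) ∧
    (∃ H ⊆ Finset.univ \ U, Feasible G (s₂ - α) X H) := by
  have hn : 2 * (s₁ + s₂) - 1 ≤ Fintype.card V :=
    htf.le_card_of_le_degree_add_degree (by omega) hσ
      (htf.nonCompleteOn_of_three_le_card (by simpa using hcard))
  have hnc : NonCompleteOn G (Finset.univ \ U) := by
    refine htf.nonCompleteOn_of_three_le_card ?_
    rw [Finset.card_sdiff_of_subset U.subset_univ, Finset.card_univ]
    omega
  have hXdeg : ∀ u, u ∉ X → s₁ + s₂ ≤ G.degree u := by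
    intro u hu
    simp only [hX, Finset.mem_filter, Finset.mem_univ, true_and, not_le] at hu
    omega
  exact ⟨hnc,
    ⟨_, subset_rfl, feasible_univ_sdiff hnc hUdeg hXdeg hσ (by omega) (by omega)⟩,
    ⟨_, subset_rfl, feasible_univ_sdiff hnc hUdeg hXdeg hσ (by omega) (by omega)⟩⟩
end

section
/- Let s₁, s₂ ≥ 1 be integers and let G be a graph with σ₂(G) ≥ 2(s₁+s₂+ε) − 1 where ε ∈ {0,1}, let X = {v : d_G(v) ≤ s₁+s₂+ε−1}, and let (G₁,G₂) be a partition of G. If Gᵢ is (sᵢ−1+ε; X)-degenerate for some i ∈ {1,2}, then there exist vertices uᵢ, vᵢ of Gᵢ such that either (a) e_G(uᵢ, G_{3−i}) − d_{Gᵢ}(uᵢ) ≥ (s_{3−i} − sᵢ) + 1, d_{Gᵢ}(uᵢ) ≤ sᵢ − 1 + ε and uᵢ = vᵢ, or (b) e_G(uᵢ, G_{3−i}) − d_{Gᵢ}(uᵢ) ≥ (s_{3−i} − sᵢ) + 1, d_G(vᵢ) ≤ s₁ + s₂ − 2 and vᵢ ∈ V(Gᵢ) ∩ X. -/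
theorem stmt_18 {V : Type*} [Fintype V] [DecidableEq V]
    (G : SimpleGraph V) [DecidableRel G.Adj] (s₁ s₂ si sj ε : ℕ)
    (hs₁ : 1 ≤ s₁) (hs₂ : 1 ≤ s₂) (hε : ε = 0 ∨ ε = 1)
    (hij : (si = s₁ ∧ sj = s₂) ∨ (si = s₂ ∧ sj = s₁))
    (hσ : ∀ u v : V, u ≠ v → ¬G.Adj u v →
      2 * (s₁ + s₂ + ε) - 1 ≤ G.degree u + G.degree v)
    (X : Finset V) (hX : X = Finset.univ.filter (fun v => G.degree v ≤ s₁ + s₂ + ε - 1))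
    (A B : Finset V) (hdisj : Disjoint A B) (hcover : A ∪ B = Finset.univ)
    (hdeg : Degenerate G (si - 1 + ε) X A) :
    ∃ u ∈ A, ∃ v ∈ A,
      (((sj : ℤ) - si) + 1 ≤ (degIn G B u : ℤ) - degIn G A u ∧
        degIn G A u ≤ si - 1 + ε ∧ u = v) ∨
      (((sj : ℤ) - si) + 1 ≤ (degIn G B u : ℤ) - degIn G A u ∧
        (G.degree v : ℤ) ≤ (s₁ : ℤ) + s₂ - 2 ∧ v ∈ X) := by
  by_contra hcon
  have hXmem : ∀ v : V, v ∈ X ↔ G.degree v ≤ s₁ + s₂ + ε - 1 := by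
    intro v; simp [hX]
  have hdegsplit : ∀ u : V, G.degree u = degIn G A u + degIn G B u := by
    intro u
    have hd : Disjoint (G.neighborFinset u ∩ A) (G.neighborFinset u ∩ B) :=
      Finset.disjoint_of_subset_left Finset.inter_subset_right
        (Finset.disjoint_of_subset_right Finset.inter_subset_right hdisj)
    rw [degIn, degIn, ← Finset.card_union_of_disjoint hd,
      ← Finset.inter_union_distrib_left, hcover, Finset.inter_univ]
    rfl
  have hA1 : ∀ u ∈ A, ((sj : ℤ) - si) + 1 ≤ (degIn G B u : ℤ) - degIn G A u →
      si - 1 + ε < degIn G A u := by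
    intro u hu hgap
    by_contra hle
    exact hcon ⟨u, hu, u, hu, Or.inl ⟨hgap, by omega, rfl⟩⟩
  have hA2 : ∀ u ∈ A, ((sj : ℤ) - si) + 1 ≤ (degIn G B u : ℤ) - degIn G A u →
      ∀ v ∈ A, v ∈ X → ¬((G.degree v : ℤ) ≤ (s₁ : ℤ) + s₂ - 2) := by
    intro u hu hgap v hv hvX hdv
    exact hcon ⟨u, hu, v, hv, Or.inr ⟨hgap, hdv, hvX⟩⟩
  obtain ⟨hnc, hnf⟩ := hdeg
  apply hnf A (Finset.Subset.refl A)
  have hcond1 : ∀ u ∈ A, u ∉ X → si - 1 + ε < degIn G A u := by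
    intro u hu huX
    have hdu : ¬(G.degree u ≤ s₁ + s₂ + ε - 1) := fun h => huX ((hXmem u).2 h)
    have hsp := hdegsplit u
    by_cases hg : ((sj : ℤ) - si) + 1 ≤ (degIn G B u : ℤ) - degIn G A u
    · exact hA1 u hu hg
    · omega
  refine ⟨hcond1, ?_, hnc⟩
  intro u hu huX v hv hvX hadj
  have hune : u ≠ v := fun h => huX (h ▸ hvX)
  have hσuv := hσ u v hune hadj
  have hdu : ¬(G.degree u ≤ s₁ + s₂ + ε - 1) := fun h => huX ((hXmem u).2 h)
  have hdvub : G.degree v ≤ s₁ + s₂ + ε - 1 := (hXmem v).1 hvX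
  have hspu := hdegsplit u
  have hspv := hdegsplit v
  have hu1 := hcond1 u hu huX
  by_cases hgu : ((sj : ℤ) - si) + 1 ≤ (degIn G B u : ℤ) - degIn G A u
  · have hdvlb := hA2 u hu hgu v hv hvX
    by_cases hgv : ((sj : ℤ) - si) + 1 ≤ (degIn G B v : ℤ) - degIn G A v
    · have := hA1 v hv hgv; omega
    · omega
  · by_cases hgv : ((sj : ℤ) - si) + 1 ≤ (degIn G B v : ℤ) - degIn G A v
    · have := hA1 v hv hgv; omega
    · omega
end

section
/- Let s₁, s₂ ≥ 2 and let G be a non-complete graph with σ₂(G) ≥ 2(s₁+s₂+1) − 1 and clique number ω(G) ≤ min{s₁, s₂}, and set X = {v : d_G(v) ≤ s₁+s₂}. If G' is an (sᵢ; X)-degenerate induced subgraph of G for some i ∈ {1,2}, then G − G' is non-complete. -/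
lemma deg_le_degIn_add {V : Type*} [Fintype V] [DecidableEq V] (G : SimpleGraph V)
    [DecidableRel G.Adj] (A : Finset V) (u : V) :
    G.degree u ≤ (G.neighborFinset u ∩ A).card + (Finset.univ \ A).card := by
  have h1 : (G.neighborFinset u ∩ A).card + (G.neighborFinset u \ A).card
      = (G.neighborFinset u).card := Finset.card_inter_add_card_sdiff _ _
  have h2 : (G.neighborFinset u \ A).card ≤ (Finset.univ \ A).card :=
    Finset.card_le_card (Finset.sdiff_subset_sdiff (Finset.subset_univ _) le_rfl)
  have h3 : (G.neighborFinset u).card = G.degree u := G.card_neighborFinset_eq_degree u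
  omega


theorem stmt_19 {V : Type*} [Fintype V] [DecidableEq V]
    (G : SimpleGraph V) [DecidableRel G.Adj] (s₁ s₂ s : ℕ)
    (hs₁ : 2 ≤ s₁) (hs₂ : 2 ≤ s₂) (hs : s = s₁ ∨ s = s₂)
    (hnc : ∃ u v : V, u ≠ v ∧ ¬G.Adj u v)
    (hσ : ∀ u v : V, u ≠ v → ¬G.Adj u v →
      2 * (s₁ + s₂ + 1) - 1 ≤ G.degree u + G.degree v)
    (hω : G.CliqueFree (min s₁ s₂ + 1))
    (X : Finset V) (hX : X = Finset.univ.filter (fun v => G.degree v ≤ s₁ + s₂))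
    (A : Finset V) (hdeg : Degenerate G s X A) :
    NonCompleteOn G (Finset.univ \ A) := by
  by_contra hcon
  have hclique : ∀ u ∈ Finset.univ \ A, ∀ v ∈ Finset.univ \ A, u ≠ v → G.Adj u v := by
    intro u hu v hv huv
    by_contra h
    exact hcon ⟨u, hu, v, hv, huv, h⟩
  have hcard : (Finset.univ \ A).card ≤ min s₁ s₂ := by
    by_contra h
    push_neg at h
    obtain ⟨t, ht, htc⟩ := Finset.exists_subset_card_eq
      (show min s₁ s₂ + 1 ≤ (Finset.univ \ A).card by omega)
    refine hω t ⟨?_, htc⟩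
    intro x hx y hy hxy
    exact hclique x (ht (Finset.mem_coe.mp hx)) y (ht (Finset.mem_coe.mp hy)) hxy
  have hc1 : (Finset.univ \ A).card ≤ s₁ := hcard.trans (min_le_left _ _)
  have hc2 : (Finset.univ \ A).card ≤ s₂ := hcard.trans (min_le_right _ _)
  have hXmem : ∀ u, u ∉ X → s₁ + s₂ + 1 ≤ G.degree u := by
    intro u hu
    rw [hX] at hu
    simp only [Finset.mem_filter, Finset.mem_univ, true_and, not_le] at hu
    omega
  refine hdeg.2 A (Finset.Subset.refl A) ⟨?_, ?_, hdeg.1⟩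
  · intro u hu huX
    have h1 := deg_le_degIn_add G A u
    have h2 := hXmem u huX
    unfold degIn
    omega
  · intro u hu huX v hv hvX hna
    have h1 := deg_le_degIn_add G A u
    have h2 := deg_le_degIn_add G A v
    have hne : u ≠ v := by rintro rfl; exact huX hvX
    have h3 := hσ u v hne hna
    unfold degIn
    omega
end
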